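/- Let A ∈ ℂ^{n×n}, λ ∈ ℂ, and let v ∈ ℂ^n be nonzero with Av = λv and A_{λ,v} invertible. Then the supremum over all Ȧ ∈ ℂ^{n×n} with ‖Ȧ‖_F = 1 of ‖A_{λ,v}^{-1} ( P_{v⊥}(Ȧ v) )‖ / ‖v‖ equals ‖A_{λ,v}^{-1}‖ (the operator norm of the inverse). -/

import Mathlib

noncomputable section

open Matrix Set

/-- `T_v`: the orthogonal complement of `v` in `ℂ^n`. -/
def Tv {n : ℕ} (v : EuclideanSpace ℂ (Fin n)) : Submodule ℂ (EuclideanSpace ℂ (Fin n)) :=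
  (ℂ ∙ v)ᗮ

/-- The linear map `A_{λ,v} : T_v → T_v`, `x ↦ P_{v⊥}((A - λ·Id) x)`. -/
def Alv {n : ℕ} (A : Matrix (Fin n) (Fin n) ℂ) (lam : ℂ) (v : EuclideanSpace ℂ (Fin n)) :
    Tv v →ₗ[ℂ] Tv v :=
  (Tv v).orthogonalProjectionOnto.toLinearMap ∘ₗ
    (Matrix.toEuclideanLin A - lam • LinearMap.id) ∘ₗ (Tv v).subtype

/-- `A_{λ,v}` as a continuous linear map. -/
def AlvC {n : ℕ} (A : Matrix (Fin n) (Fin n) ℂ) (lam : ℂ) (v : EuclideanSpace ℂ (Fin n)) :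
    Tv v →L[ℂ] Tv v :=
  LinearMap.toContinuousLinearMap (Alv A lam v)

/-- Frobenius norm of a complex matrix. -/
def frobNorm {n : ℕ} (A : Matrix (Fin n) (Fin n) ℂ) : ℝ :=
  Real.sqrt (∑ i, ∑ j, ‖A i j‖ ^ 2)

/-- The condition number `μ(A,λ,v) = ‖A‖_F ‖A_{λ,v}^{-1}‖`. -/
def mu {n : ℕ} (A : Matrix (Fin n) (Fin n) ℂ) (lam : ℂ) (v : EuclideanSpace ℂ (Fin n)) : ℝ :=
  frobNorm A * ‖(AlvC A lam v).inverse‖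

/-- Fubini-Study (angular) distance. -/
def dP {n : ℕ} (v w : EuclideanSpace ℂ (Fin n)) : ℝ :=
  Real.arccos (‖(inner ℂ v w : ℂ)‖ / (‖v‖ * ‖w‖))

/-- The distance on triples. -/
def distT {n : ℕ} (A : Matrix (Fin n) (Fin n) ℂ) (lam : ℂ) (v : EuclideanSpace ℂ (Fin n))
    (A' : Matrix (Fin n) (Fin n) ℂ) (lam' : ℂ) (v' : EuclideanSpace ℂ (Fin n)) : ℝ :=
  Real.sqrt ((frobNorm ((frobNorm A)⁻¹ • A - (frobNorm A')⁻¹ • A')) ^ 2 +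
    ‖lam / (frobNorm A : ℂ) - lam' / (frobNorm A' : ℂ)‖ ^ 2 + dP v v' ^ 2)


/-! The rank-one matrices `Ȧ = x w*` with `⟨w, v⟩ = 1` and `‖x‖ ‖w‖ = 1` send `v` to any prescribed
`x` with `‖x‖ = ‖v‖`, while `‖Ȧ v‖ ≤ ‖Ȧ‖_F ‖v‖` for every `Ȧ`. So `Ȧ v` ranges over a set squeezed
between the sphere and the closed ball of radius `‖v‖`, and the supremum is the operator norm of
`A_{λ,v}⁻¹ ∘ P_{v⊥}`. That equals `‖A_{λ,v}⁻¹‖`, since `P_{v⊥}` is a retraction onto `T_v` of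
norm at most one. -/

open Metric

section Frobenius

attribute [local instance] Matrix.frobeniusNormedAddCommGroup Matrix.frobeniusNormedSpace

variable {𝕜 m n : Type*} [RCLike 𝕜] [Fintype m] [Fintype n]

theorem Matrix.frobenius_norm_vecMulVec (u : m → 𝕜) (w : n → 𝕜) :
    ‖vecMulVec u w‖ = ‖WithLp.toLp 2 u‖ * ‖WithLp.toLp 2 w‖ := by
  simp only [frobenius_norm_def, EuclideanSpace.norm_eq, vecMulVec_apply, norm_mul,
    Real.sqrt_eq_rpow, Real.rpow_two, mul_pow, ← Finset.mul_sum, ← Finset.sum_mul]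
  rw [Real.mul_rpow (by positivity) (by positivity)]

theorem Matrix.frobenius_norm_toEuclideanLin_apply_le [DecidableEq n] (A : Matrix m n 𝕜)
    (x : EuclideanSpace 𝕜 n) : ‖toEuclideanLin A x‖ ≤ ‖A‖ * ‖x‖ := by
  have := frobenius_norm_mul A (replicateCol Unit x.ofLp)
  rwa [frobenius_norm_replicateCol, ← replicateCol_mulVec, frobenius_norm_replicateCol] at this

theorem frobNorm_eq_norm {n : ℕ} (A : Matrix (Fin n) (Fin n) ℂ) : frobNorm A = ‖A‖ := by
  rw [frobNorm, frobenius_norm_def, Real.sqrt_eq_rpow]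
  simp

theorem image_toEuclideanLin_apply_subset_closedBall {n : ℕ} (v : EuclideanSpace ℂ (Fin n)) :
    (fun A => toEuclideanLin A v) '' {A | frobNorm A = 1} ⊆ closedBall 0 ‖v‖ := by
  rintro _ ⟨A, hA : frobNorm A = 1, rfl⟩
  rw [frobNorm_eq_norm] at hA
  simpa [hA] using frobenius_norm_toEuclideanLin_apply_le A v

theorem sphere_subset_image_toEuclideanLin_apply {n : ℕ} {v : EuclideanSpace ℂ (Fin n)}
    (hv : v ≠ 0) : sphere 0 ‖v‖ ⊆ (fun A => toEuclideanLin A v) '' {A | frobNorm A = 1} := by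
  intro x hx
  rw [mem_sphere_zero_iff_norm] at hx
  have hv' : ‖v‖ ≠ 0 := norm_ne_zero_iff.2 hv
  set w : EuclideanSpace ℂ (Fin n) := ((‖v‖ ^ 2 : ℝ) : ℂ)⁻¹ • v
  refine ⟨vecMulVec x (star w), ?_, ?_⟩
  · change frobNorm _ = 1
    have hstar : ‖WithLp.toLp 2 (star w.ofLp)‖ = ‖w‖ := by simp [EuclideanSpace.norm_eq]
    rw [frobNorm_eq_norm, frobenius_norm_vecMulVec, WithLp.toLp_ofLp, hstar]
    simp only [w, hx, Complex.ofReal_pow, norm_smul, norm_inv, norm_pow, Complex.norm_real,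
      norm_norm]
    field_simp
  · rw [← InnerProductSpace.symm_toEuclideanLin_rankOne]
    simp [w, inner_self_eq_norm_sq_to_K, smul_smul, hv']

end Frobenius

theorem Submodule.norm_comp_orthogonalProjectionOnto {𝕜 E F : Type*} [RCLike 𝕜]
    [NormedAddCommGroup E] [InnerProductSpace 𝕜 E] [SeminormedAddCommGroup F] [NormedSpace 𝕜 F]
    (K : Submodule 𝕜 E) [K.HasOrthogonalProjection] (B : K →L[𝕜] F) :
    ‖B ∘L K.orthogonalProjectionOnto‖ = ‖B‖ := by
  refine le_antisymm ?_ ?_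
  · calc ‖B ∘L K.orthogonalProjectionOnto‖ ≤ ‖B‖ * ‖K.orthogonalProjectionOnto‖ :=
          B.opNorm_comp_le _
      _ ≤ ‖B‖ * 1 := by gcongr; exact K.orthogonalProjectionOnto_norm_le
      _ = ‖B‖ := mul_one _
  · calc ‖B‖ = ‖(B ∘L K.orthogonalProjectionOnto) ∘L K.subtypeL‖ := by
          congr 1; ext x; simp
      _ ≤ ‖B ∘L K.orthogonalProjectionOnto‖ := by
          refine ContinuousLinearMap.opNorm_le_bound _ (norm_nonneg _) fun x => ?_
          simpa using (B ∘L K.orthogonalProjectionOnto).le_opNorm (x : E)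

theorem ContinuousLinearMap.sSup_image_norm_apply_div_eq_opNorm {𝕜 E F : Type*} [RCLike 𝕜]
    [NormedAddCommGroup E] [NormedSpace 𝕜 E] [SeminormedAddCommGroup F] [NormedSpace 𝕜 F]
    (T : E →L[𝕜] F) {r : ℝ} (hr : 0 < r) {M : Set E} (hsphere : sphere 0 r ⊆ M)
    (hball : M ⊆ closedBall 0 r) :
    sSup ((fun x => ‖T x‖ / r) '' M) = ‖T‖ := by
  have hub : ∀ s ∈ (fun x => ‖T x‖ / r) '' M, s ≤ ‖T‖ := by
    rintro _ ⟨x, hx, rfl⟩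
    rw [div_le_iff₀ hr]
    exact T.le_opNorm_of_le (mem_closedBall_zero_iff.1 (hball hx))
  refine le_antisymm (Real.sSup_le hub (norm_nonneg T)) ?_
  refine T.opNorm_le_bound (Real.sSup_nonneg (by rintro _ ⟨x, -, rfl⟩; positivity)) fun w => ?_
  rcases eq_or_ne w 0 with rfl | hw
  · simp
  have hw' : 0 < ‖w‖ := norm_pos_iff.2 hw
  set x : E := ((r / ‖w‖ : ℝ) : 𝕜) • w
  have hx : ‖x‖ = r := by simp [x, norm_smul, abs_of_pos hr, hw'.ne']
  have hratio : ‖T x‖ / r = ‖T w‖ / ‖w‖ := by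
    rw [map_smul, norm_smul, norm_algebraMap', norm_div, norm_norm, Real.norm_of_nonneg hr.le]
    field_simp
  rw [← div_le_iff₀ hw', ← hratio]
  exact le_csSup ⟨‖T‖, hub⟩ ⟨x, hsphere (mem_sphere_zero_iff_norm.2 hx), rfl⟩

theorem eigenvector_condition_eq_general {n : ℕ} (A : Matrix (Fin n) (Fin n) ℂ) (lam : ℂ)
    (v : EuclideanSpace ℂ (Fin n)) (hv : v ≠ 0) :
    sSup {r : ℝ | ∃ Adot : Matrix (Fin n) (Fin n) ℂ, frobNorm Adot = 1 ∧
        r = ‖(AlvC A lam v).inverse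
              (((Tv v).orthogonalProjectionOnto) (Matrix.toEuclideanLin Adot v))‖ / ‖v‖} =
      ‖(AlvC A lam v).inverse‖ := by
  set B := (AlvC A lam v).inverse
  have hset : {r : ℝ | ∃ Adot : Matrix (Fin n) (Fin n) ℂ, frobNorm Adot = 1 ∧
      r = ‖B ((Tv v).orthogonalProjectionOnto (toEuclideanLin Adot v))‖ / ‖v‖} =
      (fun x => ‖(B ∘L (Tv v).orthogonalProjectionOnto) x‖ / ‖v‖) ''
        ((fun Adot => toEuclideanLin Adot v) '' {Adot | frobNorm Adot = 1}) := by
    ext r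
    simp [eq_comm]
  rw [hset, ContinuousLinearMap.sSup_image_norm_apply_div_eq_opNorm _ (norm_pos_iff.2 hv)
    (sphere_subset_image_toEuclideanLin_apply hv) (image_toEuclideanLin_apply_subset_closedBall v),
    Submodule.norm_comp_orthogonalProjectionOnto]

/-- Proposition: the eigenvector condition number equals `‖A_{λ,v}^{-1}‖`. -/
theorem eigenvector_condition_eq {n : ℕ} (A : Matrix (Fin n) (Fin n) ℂ) (lam : ℂ)
    (v : EuclideanSpace ℂ (Fin n)) (hv : v ≠ 0)
    (heig : Matrix.toEuclideanLin A v = lam • v)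
    (hinv : Function.Bijective (Alv A lam v)) :
    sSup {r : ℝ | ∃ Adot : Matrix (Fin n) (Fin n) ℂ, frobNorm Adot = 1 ∧
        r = ‖(AlvC A lam v).inverse
              (((Tv v).orthogonalProjectionOnto) (Matrix.toEuclideanLin Adot v))‖ / ‖v‖} =
      ‖(AlvC A lam v).inverse‖ :=
  eigenvector_condition_eq_general A lam v hv

end
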